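/- arXiv:2408.02972 — 3 statements merged into one kernel-verified Lean document; each statement's English description precedes it below -/
import Mathlib

section
/- Let α = 2 and ξ = Σ_{k=1}^∞ 2^{−k!} (a Liouville number). Then for η = 0 and any fixed δ ∈ (0, 1/2), #{1 ≤ n ≤ N : ‖ξ·2^n‖ ≥ δ} = o(log N) as N → ∞. -/
set_option maxHeartbeats 1000000


/-- Distance from a real number to its nearest integer. -/
noncomputable def nearestIntDist (x : ℝ) : ℝ := |x - round x|

private lemma fact_add_le' (m k : ℕ) :
    (m + 1).factorial + k ≤ (k + m + 1).factorial := by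
  induction k with
  | zero => simp
  | succ k ih =>
    have h2 : (k + 1 + m + 1).factorial = (k + m + 2) * (k + m + 1).factorial := by
      rw [show k + 1 + m + 1 = (k + m + 1) + 1 by ring, Nat.factorial_succ]
    have h3 : 1 ≤ (k + m + 1).factorial := Nat.factorial_pos _
    have h5 : 2 * (k + m + 1).factorial ≤ (k + m + 2) * (k + m + 1).factorial := by
      have := Nat.factorial_pos (k + m + 1)
      nlinarith
    rw [h2]
    omega

private lemma pow_le_fact' (K d : ℕ) (hK : 1 ≤ K) : K ^ d ≤ (K + d).factorial := by
  induction d with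
  | zero => simpa using Nat.one_le_iff_ne_zero.mpr (Nat.factorial_ne_zero K)
  | succ d ih =>
    have : K ^ (d + 1) = K ^ d * K := pow_succ K d
    rw [this, show K + (d + 1) = (K + d) + 1 by ring, Nat.factorial_succ]
    calc K ^ d * K ≤ (K + d).factorial * (K + d + 1) :=
          Nat.mul_le_mul ih (by omega)
      _ = (K + d + 1) * (K + d).factorial := by ring

private lemma summable_aux (C : ℤ) (g : ℕ → ℕ) (hg : ∀ k, k ≤ g k) :
    Summable (fun k : ℕ => (2 : ℝ) ^ (C - (g k : ℤ))) := by
  have hs : Summable (fun k : ℕ => (2 : ℝ) ^ C * (1 / 2 : ℝ) ^ k) :=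
    (summable_geometric_of_lt_one (by norm_num) (by norm_num)).mul_left _
  apply Summable.of_nonneg_of_le (fun k => by positivity) _ hs
  intro k
  have h1 : (2 : ℝ) ^ (C - (g k : ℤ)) ≤ (2 : ℝ) ^ (C - (k : ℤ)) := by
    apply zpow_le_zpow_right₀ (by norm_num)
    have := hg k
    omega
  have h2 : (2 : ℝ) ^ (C - (k : ℤ)) = (2 : ℝ) ^ C * (1 / 2 : ℝ) ^ k := by
    rw [sub_eq_add_neg, zpow_add₀ (by norm_num : (2:ℝ) ≠ 0)]
    congr 1
    rw [zpow_neg, zpow_natCast, one_div, inv_pow]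
  linarith

private lemma tsum_tail_eval (C : ℤ) :
    ∑' k : ℕ, (2 : ℝ) ^ (C - (k : ℤ)) = 2 * (2 : ℝ) ^ C := by
  have h2 : ∀ k : ℕ, (2 : ℝ) ^ (C - (k : ℤ)) = (2 : ℝ) ^ C * (1 / 2 : ℝ) ^ k := by
    intro k
    rw [sub_eq_add_neg, zpow_add₀ (by norm_num : (2:ℝ) ≠ 0)]
    congr 1
    rw [zpow_neg, zpow_natCast, one_div, inv_pow]
  rw [tsum_congr h2, tsum_mul_left, tsum_geometric_of_lt_one (by norm_num) (by norm_num)]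
  norm_num
  ring

/-- Key estimate: if `m! ≤ n` then `‖ξ 2^n‖ ≤ 2 · 2^(n - (m+1)!)`. -/
private lemma key_estimate (ξ : ℝ)
    (hξ : ξ = ∑' k : ℕ, (2 : ℝ) ^ (-(Nat.factorial (k + 1) : ℤ)))
    (n m : ℕ) (hmn : m.factorial ≤ n) :
    nearestIntDist (ξ * 2 ^ n) ≤ 2 * (2 : ℝ) ^ ((n : ℤ) - ((m + 1).factorial : ℤ)) := by
  set f : ℕ → ℝ := fun k => (2 : ℝ) ^ ((n : ℤ) - ((k + 1).factorial : ℤ)) with hf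
  have hsum : Summable f :=
    summable_aux _ _ (fun k => le_trans (Nat.le_succ k) (Nat.self_le_factorial _))
  have hsum_tail : Summable (fun k => f (k + m)) := hsum.comp_injective (add_left_injective m)
  have hmul : ξ * 2 ^ n = ∑' k : ℕ, f k := by
    rw [hξ, ← tsum_mul_right]
    apply tsum_congr
    intro k
    rw [hf]
    have : (2 : ℝ) ^ n = (2 : ℝ) ^ ((n : ℕ) : ℤ) := (zpow_natCast 2 n).symm
    rw [this, ← zpow_add₀ (by norm_num : (2:ℝ) ≠ 0)]
    congr 1
    ring
  have hsplit : ∑' k : ℕ, f k = (∑ k ∈ Finset.range m, f k) + ∑' k : ℕ, f (k + m) :=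
    (Summable.sum_add_tsum_nat_add m hsum).symm
  set T : ℝ := ∑' k : ℕ, f (k + m) with hT
  -- the finite part is a natural number
  set z : ℕ := ∑ k ∈ Finset.range m, 2 ^ (n - (k + 1).factorial) with hz
  have hzval : (z : ℝ) = ∑ k ∈ Finset.range m, f k := by
    rw [hz]
    push_cast
    apply Finset.sum_congr rfl
    intro k hk
    have hk' : k + 1 ≤ m := Finset.mem_range.mp hk
    have hfle : (k + 1).factorial ≤ n := le_trans (Nat.factorial_le hk') hmn
    have : ((n : ℤ) - ((k + 1).factorial : ℤ)) = ((n - (k + 1).factorial : ℕ) : ℤ) := by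
      omega
    show (2:ℝ) ^ (n - (k + 1).factorial) = (2:ℝ) ^ ((n : ℤ) - ((k + 1).factorial : ℤ))
    rw [this, zpow_natCast]
  -- bounds on the tail T
  have hT0 : 0 ≤ T := tsum_nonneg (fun k => by positivity)
  have hTle : T ≤ 2 * (2 : ℝ) ^ ((n : ℤ) - ((m + 1).factorial : ℤ)) := by
    have hsum2 : Summable (fun k : ℕ => (2 : ℝ) ^ (((n : ℤ) - ((m+1).factorial : ℤ)) - (k : ℤ))) :=
      summable_aux _ id (fun k => le_rfl)
    have hle : ∀ k : ℕ, f (k + m) ≤ (2 : ℝ) ^ (((n : ℤ) - ((m+1).factorial : ℤ)) - (k : ℤ)) := by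
      intro k
      rw [hf]
      apply zpow_le_zpow_right₀ (by norm_num)
      have := fact_add_le' m k
      omega
    calc T ≤ ∑' k : ℕ, (2 : ℝ) ^ (((n : ℤ) - ((m+1).factorial : ℤ)) - (k : ℤ)) :=
          Summable.tsum_le_tsum hle hsum_tail hsum2
      _ = 2 * (2 : ℝ) ^ ((n : ℤ) - ((m + 1).factorial : ℤ)) := tsum_tail_eval _
  -- nearest integer distance bound
  have hx : ξ * 2 ^ n = (z : ℝ) + T := by rw [hmul, hsplit, hzval]
  have hdist : nearestIntDist (ξ * 2 ^ n) ≤ T := by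
    rw [hx, nearestIntDist]
    rw [round_natCast_add]
    push_cast
    have : (z : ℝ) + T - ((z : ℝ) + (round T : ℝ)) = T - round T := by ring
    rw [this, abs_sub_round_eq_min]
    refine le_trans inf_le_left ?_
    have h2 : (0 : ℝ) ≤ (⌊T⌋ : ℝ) := by exact_mod_cast Int.floor_nonneg.mpr hT0
    have h1 : Int.fract T = T - (⌊T⌋ : ℝ) := Int.self_sub_floor T ▸ rfl
    rw [h1]
    linarith
  linarith

/-- For the Liouville number `ξ = Σ_{k≥1} 2^{−k!}` and any fixed `δ ∈ (0, 1/2)`,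
`#{1 ≤ n ≤ N : ‖ξ·2^n‖ ≥ δ} = o(log N)` as `N → ∞`. -/
theorem liouville_number_count_little_o (ξ : ℝ)
    (hξ : ξ = ∑' k : ℕ, (2 : ℝ) ^ (-(Nat.factorial (k + 1) : ℤ)))
    (δ : ℝ) (hδ0 : 0 < δ) (hδ2 : δ < 1 / 2) :
    Filter.Tendsto
      (fun N : ℕ =>
        ({n : ℕ | 1 ≤ n ∧ n ≤ N ∧ δ ≤ nearestIntDist (ξ * 2 ^ n)}.ncard : ℝ) / Real.log N)
      Filter.atTop (nhds 0) := by
  -- the cutoff constant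
  set c : ℕ := ⌊Real.log (2 / δ) / Real.log 2⌋₊ with hc
  -- bad n are close to factorials
  have bad_near : ∀ n : ℕ, 1 ≤ n → δ ≤ nearestIntDist (ξ * 2 ^ n) →
      ∃ j : ℕ, n < j.factorial ∧ j.factorial ≤ n + c ∧ j ≤ n + 1 := by
    intro n hn hbad
    set m : ℕ := Nat.findGreatest (fun j => j.factorial ≤ n) n with hm
    have hm1 : 1 ≤ m := Nat.le_findGreatest hn (by simpa using hn)
    have hmn : m.factorial ≤ n := Nat.findGreatest_spec (P := fun j => j.factorial ≤ n) hn (by simpa using hn)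
    have hmlen : m ≤ n := Nat.findGreatest_le n
    have hlt : n < (m + 1).factorial := by
      by_cases h : m + 1 ≤ n
      · have hgt : ¬ ((m + 1).factorial ≤ n) := by
          have := Nat.findGreatest_is_greatest (P := fun j => j.factorial ≤ n) (n := n)
            (k := m + 1) (by omega) h
          simpa using this
        omega
      · have := Nat.self_le_factorial (m + 1)
        omega
    refine ⟨m + 1, hlt, ?_, by omega⟩
    -- from key estimate: δ ≤ 2 * 2^(n - (m+1)!)
    have hk := key_estimate ξ hξ n m hmn
    have hδle : δ ≤ 2 * (2 : ℝ) ^ ((n : ℤ) - ((m + 1).factorial : ℤ)) := le_trans hbad hk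
    set e : ℕ := (m + 1).factorial - n with he
    have hee : ((n : ℤ) - ((m + 1).factorial : ℤ)) = -(e : ℤ) := by
      rw [he]; omega
    rw [hee] at hδle
    have hpow : (2 : ℝ) ^ e ≤ 2 / δ := by
      have h1 : (2 : ℝ) ^ (-(e : ℤ)) = ((2 : ℝ) ^ e)⁻¹ := by
        rw [zpow_neg, zpow_natCast]
      rw [h1] at hδle
      have h2 : (0 : ℝ) < (2 : ℝ) ^ e := by positivity
      have h3 : δ * (2:ℝ) ^ e ≤ 2 := by
        have h4 := mul_le_mul_of_nonneg_right hδle (le_of_lt h2)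
        have h5 : 2 * ((2:ℝ) ^ e)⁻¹ * (2:ℝ) ^ e = 2 := by field_simp
        linarith
      rw [le_div_iff₀ hδ0]
      linarith
    have hec : e ≤ c := by
      rw [hc]
      apply Nat.le_floor
      rw [le_div_iff₀ (Real.log_pos (by norm_num))]
      have h3 : Real.log ((2:ℝ) ^ e) ≤ Real.log (2 / δ) :=
        Real.log_le_log (by positivity) hpow
      rw [Real.log_pow] at h3
      linarith
    omega
  -- the main counting bound, for every K ≥ 2 and N ≥ 1
  have count_bound : ∀ K N : ℕ, 2 ≤ K → 1 ≤ N →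
      (({n : ℕ | 1 ≤ n ∧ n ≤ N ∧ δ ≤ nearestIntDist (ξ * 2 ^ n)}.ncard : ℝ)) ≤
        ((K : ℝ) + 1 + Real.log (N + c) / Real.log K) * c := by
    intro K N hK hN
    set F : Finset ℕ := ((Finset.range (N + 2)).filter (fun j => j.factorial ≤ N + c)).biUnion
      (fun j => Finset.Ico (j.factorial - c) j.factorial) with hF
    have hsub : {n : ℕ | 1 ≤ n ∧ n ≤ N ∧ δ ≤ nearestIntDist (ξ * 2 ^ n)} ⊆ ↑F := by
      intro n hn
      obtain ⟨hn1, hnN, hbad⟩ := hn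
      obtain ⟨j, hj1, hj2, hj3⟩ := bad_near n hn1 hbad
      simp only [hF, Finset.coe_biUnion, Set.mem_iUnion, Finset.mem_coe, Finset.mem_filter,
        Finset.mem_range, Finset.mem_Ico]
      exact ⟨j, ⟨by omega, by omega⟩, by omega, hj1⟩
    have hcard1 : ({n : ℕ | 1 ≤ n ∧ n ≤ N ∧ δ ≤ nearestIntDist (ξ * 2 ^ n)}.ncard) ≤ F.card := by
      rw [← Set.ncard_coe_finset F]
      exact Set.ncard_le_ncard hsub (F.finite_toSet)
    -- bound on the filter cardinality
    set B : ℕ := K + ⌊Real.log (N + c) / Real.log K⌋₊ + 1 with hB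
    have hfilter : ((Finset.range (N + 2)).filter (fun j => j.factorial ≤ N + c)) ⊆
        Finset.range B := by
      intro j hj
      simp only [Finset.mem_filter, Finset.mem_range] at hj ⊢
      obtain ⟨-, hjf⟩ := hj
      by_cases hjK : j ≤ K
      · omega
      · push_neg at hjK
        have hpf : K ^ (j - K) ≤ j.factorial := by
          have := pow_le_fact' K (j - K) (by omega)
          rwa [show K + (j - K) = j by omega] at this
        have hreal : (K : ℝ) ^ (j - K) ≤ (N : ℝ) + c := by
          have : (K ^ (j - K) : ℝ) ≤ ((N + c : ℕ) : ℝ) := by exact_mod_cast le_trans hpf hjf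
          push_cast at this
          linarith
        have hlog : ((j - K : ℕ) : ℝ) * Real.log K ≤ Real.log ((N : ℝ) + c) := by
          have h3 : Real.log ((K : ℝ) ^ (j - K)) ≤ Real.log ((N : ℝ) + c) :=
            Real.log_le_log (by positivity) hreal
          rwa [Real.log_pow] at h3
        have hKlog : 0 < Real.log K := Real.log_pos (by exact_mod_cast hK)
        have : ((j - K : ℕ) : ℝ) ≤ Real.log ((N : ℝ) + c) / Real.log K := by
          rw [le_div_iff₀ hKlog]; linarith
        have hfloor : j - K ≤ ⌊Real.log ((N : ℝ) + c) / Real.log K⌋₊ := Nat.le_floor this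
        omega
    have hcard2 : F.card ≤ B * c := by
      calc F.card ≤ ∑ j ∈ (Finset.range (N + 2)).filter (fun j => j.factorial ≤ N + c),
            (Finset.Ico (j.factorial - c) j.factorial).card := Finset.card_biUnion_le
        _ ≤ ∑ j ∈ (Finset.range (N + 2)).filter (fun j => j.factorial ≤ N + c), c := by
            apply Finset.sum_le_sum
            intro j hj
            rw [Nat.card_Ico]
            omega
        _ = ((Finset.range (N + 2)).filter (fun j => j.factorial ≤ N + c)).card * c := by
            rw [Finset.sum_const, smul_eq_mul]
        _ ≤ B * c := by
            apply Nat.mul_le_mul_right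
            calc _ ≤ (Finset.range B).card := Finset.card_le_card hfilter
              _ = B := Finset.card_range B
    -- cast to reals
    have hcast : (({n : ℕ | 1 ≤ n ∧ n ≤ N ∧ δ ≤ nearestIntDist (ξ * 2 ^ n)}.ncard : ℝ)) ≤
        (B : ℝ) * c := by exact_mod_cast le_trans hcard1 hcard2
    refine le_trans hcast ?_
    have hBle : (B : ℝ) ≤ (K : ℝ) + 1 + Real.log (N + c) / Real.log K := by
      rw [hB]
      push_cast
      have hnn : 0 ≤ Real.log ((N:ℝ) + c) / Real.log K := by
        apply div_nonneg
        · apply Real.log_nonneg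
          have : (1 : ℝ) ≤ (N : ℝ) := by exact_mod_cast hN
          linarith [Nat.cast_nonneg (α := ℝ) c]
        · exact le_of_lt (Real.log_pos (by exact_mod_cast hK))
      have := Nat.floor_le hnn
      push_cast
      linarith
    have : (0:ℝ) ≤ c := Nat.cast_nonneg c
    nlinarith
  -- now the ε-argument
  rw [Metric.tendsto_atTop]
  intro ε hε
  -- choose K so that c / log K < ε / 2
  set K : ℕ := max 2 (⌈Real.exp (2 * ((c : ℝ) + 1) / ε)⌉₊ + 2) with hKdef
  have hK2 : 2 ≤ K := le_max_left _ _
  have hKlog : 0 < Real.log K := Real.log_pos (by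
    have : (2:ℝ) ≤ (K:ℝ) := by exact_mod_cast hK2
    linarith)
  have hKlogbig : 2 * ((c : ℝ) + 1) / ε ≤ Real.log K := by
    have h1 : Real.exp (2 * ((c : ℝ) + 1) / ε) ≤ (K : ℝ) := by
      have h2 : (⌈Real.exp (2 * ((c : ℝ) + 1) / ε)⌉₊ + 2 : ℕ) ≤ K := le_max_right _ _
      have h3 := Nat.le_ceil (Real.exp (2 * ((c : ℝ) + 1) / ε))
      have h4 : ((⌈Real.exp (2 * ((c : ℝ) + 1) / ε)⌉₊ + 2 : ℕ) : ℝ) ≤ (K : ℝ) := by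
        exact_mod_cast h2
      push_cast at h4
      linarith
    calc 2 * ((c : ℝ) + 1) / ε = Real.log (Real.exp (2 * ((c : ℝ) + 1) / ε)) :=
          (Real.log_exp _).symm
      _ ≤ Real.log K := Real.log_le_log (Real.exp_pos _) h1
  have hcK : (c : ℝ) / Real.log K < ε / 2 := by
    have hc0 : (0:ℝ) ≤ c := Nat.cast_nonneg c
    have h1 : (c : ℝ) / Real.log K ≤ (c : ℝ) / (2 * ((c : ℝ) + 1) / ε) := by
      apply div_le_div_of_nonneg_left hc0 _ hKlogbig
      positivity
    have h2 : (c : ℝ) / (2 * ((c : ℝ) + 1) / ε) = (c : ℝ) * ε / (2 * ((c : ℝ) + 1)) := by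
      field_simp
    rw [h2] at h1
    have h3 : (c : ℝ) * ε / (2 * ((c : ℝ) + 1)) < ε / 2 := by
      rw [div_lt_div_iff₀ (by positivity) (by norm_num)]
      nlinarith
    linarith
  -- the constant A
  set A : ℝ := ((K : ℝ) + 1) * c + (c : ℝ) * Real.log (1 + c) / Real.log K with hA
  have hA0 : 0 ≤ A := by
    have h1 : (0:ℝ) ≤ Real.log (1 + c) := Real.log_nonneg (by
      linarith [Nat.cast_nonneg (α := ℝ) c])
    have h2 : (0:ℝ) ≤ (c:ℝ) := Nat.cast_nonneg c
    have h3 : (0:ℝ) ≤ (K:ℝ) := Nat.cast_nonneg K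
    have := hKlog
    positivity
  -- choose N₀
  refine ⟨⌈Real.exp (2 * (A + 1) / ε)⌉₊ + 2, ?_⟩
  intro N hN
  have hN1 : 1 ≤ N := by omega
  have hNbig : 2 * (A + 1) / ε ≤ Real.log N := by
    have h1 : Real.exp (2 * (A + 1) / ε) ≤ (N : ℝ) := by
      have h3 := Nat.le_ceil (Real.exp (2 * (A + 1) / ε))
      have h4 : ((⌈Real.exp (2 * (A + 1) / ε)⌉₊ + 2 : ℕ) : ℝ) ≤ (N : ℝ) := by exact_mod_cast hN
      push_cast at h4
      linarith
    calc 2 * (A + 1) / ε = Real.log (Real.exp (2 * (A + 1) / ε)) := (Real.log_exp _).symm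
      _ ≤ Real.log N := Real.log_le_log (Real.exp_pos _) h1
  have hlogN : 0 < Real.log N := by
    have : (0:ℝ) < 2 * (A + 1) / ε := by positivity
    linarith
  -- the bound
  have hb := count_bound K N hK2 hN1
  have hlogsum : Real.log ((N:ℝ) + c) ≤ Real.log N + Real.log (1 + c) := by
    have hN0 : (0:ℝ) < N := by exact_mod_cast hN1
    have hc0 : (0:ℝ) ≤ c := Nat.cast_nonneg c
    have hN0' : (1:ℝ) ≤ (N:ℝ) := by exact_mod_cast hN1
    have h1 : (N:ℝ) + c ≤ (N:ℝ) * (1 + c) := by nlinarith [mul_nonneg hc0 (sub_nonneg.mpr hN0')]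
    calc Real.log ((N:ℝ) + c) ≤ Real.log ((N:ℝ) * (1 + c)) :=
          Real.log_le_log (by positivity) h1
      _ = Real.log N + Real.log (1 + c) := Real.log_mul (by positivity) (by positivity)
  -- combine: ncard ≤ A + log N * (c / log K)
  have hfinal : (({n : ℕ | 1 ≤ n ∧ n ≤ N ∧ δ ≤ nearestIntDist (ξ * 2 ^ n)}.ncard : ℝ)) ≤
      A + Real.log N * ((c : ℝ) / Real.log K) := by
    have hc0 : (0:ℝ) ≤ c := Nat.cast_nonneg c
    have h1 : ((K : ℝ) + 1 + Real.log ((N:ℝ) + c) / Real.log K) * c ≤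
        ((K : ℝ) + 1 + (Real.log N + Real.log (1 + c)) / Real.log K) * c := by
      gcongr
    refine le_trans hb (le_trans h1 (le_of_eq ?_))
    rw [hA]
    field_simp
    ring
  -- conclude
  have hnn : (0:ℝ) ≤ (({n : ℕ | 1 ≤ n ∧ n ≤ N ∧ δ ≤ nearestIntDist (ξ * 2 ^ n)}.ncard : ℝ)) / Real.log N := by
    apply div_nonneg (Nat.cast_nonneg _) (le_of_lt hlogN)
  rw [Real.dist_eq, sub_zero, abs_of_nonneg hnn]
  have hq : (({n : ℕ | 1 ≤ n ∧ n ≤ N ∧ δ ≤ nearestIntDist (ξ * 2 ^ n)}.ncard : ℝ)) / Real.log N ≤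
      A / Real.log N + (c : ℝ) / Real.log K := by
    have h1 : (({n : ℕ | 1 ≤ n ∧ n ≤ N ∧ δ ≤ nearestIntDist (ξ * 2 ^ n)}.ncard : ℝ)) / Real.log N ≤
        (A + Real.log N * ((c : ℝ) / Real.log K)) / Real.log N := by
      gcongr
    have h2 : (A + Real.log N * ((c : ℝ) / Real.log K)) / Real.log N =
        A / Real.log N + (c : ℝ) / Real.log K := by
      field_simp
    linarith
  have hAdiv : A / Real.log N < ε / 2 := by
    have h1 : A / Real.log N ≤ A / (2 * (A + 1) / ε) := by
      apply div_le_div_of_nonneg_left hA0 _ hNbig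
      positivity
    have h2 : A / (2 * (A + 1) / ε) = A * ε / (2 * (A + 1)) := by field_simp
    rw [h2] at h1
    have h3 : A * ε / (2 * (A + 1)) < ε / 2 := by
      rw [div_lt_div_iff₀ (by positivity) (by norm_num)]
      nlinarith
    linarith
  linarith
end

section
/- Let α > 1 be a real algebraic number with minimal polynomial f(x) = a_d x^d + ⋯ + a_1 x + a_0 ∈ ℤ[x], let L(α) = Σ_{j=0}^d |a_j| and L̃(α) = |Σ_{j=0}^d a_j|. Let ξ, η be real with L̃(α)|η| < 1 and set δ = (1 − |η|·L̃(α))/L(α). Write ξα^n = A_n + η + ε_n with A_n ∈ ℤ and |ε_n| ≤ 1/2. If ‖ξα^{n+i} − η‖ < δ for all i = 0, 1, …, d, then a_d A_{n+d} + a_{d−1} A_{n+d−1} + ⋯ + a_0 A_n = 0. -/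
/-!
Writing `ξ α^m = A_m + η + ε_m`, the relation `Σ a_i α^i = 0` multiplied by `ξ α^n` gives
`Σ a_i A_{n+i} = -η Σ a_i - Σ a_i ε_{n+i}`. The left side is an integer, and the right side has
absolute value less than `|η| L̃ + L δ = 1` once every `|ε_{n+i}| < δ`; hence it vanishes.
-/

open Finset

theorem sum_mul_mul_pow_add_eq_zero {R : Type*} [CommSemiring R] {s : Finset ℕ} {c : ℕ → R}
    {α : R} (h : ∑ i ∈ s, c i * α ^ i = 0) (ξ : R) (n : ℕ) :
    ∑ i ∈ s, c i * (ξ * α ^ (n + i)) = 0 :=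
  calc ∑ i ∈ s, c i * (ξ * α ^ (n + i)) = ξ * α ^ n * ∑ i ∈ s, c i * α ^ i := by
        rw [mul_sum]
        exact sum_congr rfl fun i _ => by ring
    _ = 0 := by rw [h, mul_zero]

section

variable {ι : Type*} {s : Finset ι}

theorem abs_sum_mul_lt_sum_abs_mul {c ε : ι → ℝ} {δ : ℝ} (hc : 0 < ∑ i ∈ s, |c i|)
    (hε : ∀ i ∈ s, |ε i| < δ) : |∑ i ∈ s, c i * ε i| < (∑ i ∈ s, |c i|) * δ := by
  obtain ⟨j, hj, hcj⟩ : ∃ j ∈ s, 0 < |c j| := exists_lt_of_sum_lt (by simpa using hc)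
  calc |∑ i ∈ s, c i * ε i| ≤ ∑ i ∈ s, |c i| * |ε i| := by
        simpa only [abs_mul] using abs_sum_le_sum_abs (fun i => c i * ε i) s
    _ < ∑ i ∈ s, |c i| * δ :=
        sum_lt_sum (fun i hi => mul_le_mul_of_nonneg_left (hε i hi).le (abs_nonneg _))
          ⟨j, hj, mul_lt_mul_of_pos_left (hε j hj) hcj⟩
    _ = (∑ i ∈ s, |c i|) * δ := (sum_mul ..).symm

theorem sum_mul_eq_zero_of_eq_int_add_add {c A : ι → ℤ} {x ε : ι → ℝ} {η δ : ℝ}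
    (hx : ∑ i ∈ s, (c i : ℝ) * x i = 0) (hdecomp : ∀ i ∈ s, x i = A i + η + ε i)
    (hδ : δ = (1 - |η| * ((|∑ i ∈ s, c i| : ℤ) : ℝ)) / ∑ i ∈ s, ((|c i| : ℤ) : ℝ))
    (hε : ∀ i ∈ s, |ε i| < δ) : ∑ i ∈ s, c i * A i = 0 := by
  push_cast at hδ
  rcases (sum_nonneg fun i _ => abs_nonneg (c i : ℝ)).eq_or_lt with hL | hL
  · have hc : ∀ i ∈ s, c i = 0 := fun i hi => by
      simpa using (sum_eq_zero_iff_of_nonneg fun i _ => abs_nonneg (c i : ℝ)).1 hL.symm i hi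
    exact sum_eq_zero fun i hi => by rw [hc i hi, zero_mul]
  have hsplit : ∑ i ∈ s, (c i : ℝ) * x i
      = ∑ i ∈ s, (c i : ℝ) * A i + η * ∑ i ∈ s, (c i : ℝ) + ∑ i ∈ s, (c i : ℝ) * ε i := by
    rw [mul_sum, ← sum_add_distrib, ← sum_add_distrib]
    exact sum_congr rfl fun i hi => by rw [hdecomp i hi]; ring
  have hLδ : (∑ i ∈ s, |(c i : ℝ)|) * δ = 1 - |η| * |∑ i ∈ s, (c i : ℝ)| := by
    rw [hδ, mul_div_cancel₀ _ hL.ne']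
  have hlt : |((∑ i ∈ s, c i * A i : ℤ) : ℝ)| < 1 :=
    calc |((∑ i ∈ s, c i * A i : ℤ) : ℝ)|
        = |η * ∑ i ∈ s, (c i : ℝ) + ∑ i ∈ s, (c i : ℝ) * ε i| := by
          rw [← abs_neg]; push_cast; congr 1; linarith
      _ ≤ |η| * |∑ i ∈ s, (c i : ℝ)| + |∑ i ∈ s, (c i : ℝ) * ε i| := by
          rw [← abs_mul]; exact abs_add_le _ _
      _ < |η| * |∑ i ∈ s, (c i : ℝ)| + (∑ i ∈ s, |(c i : ℝ)|) * δ := by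
          gcongr; exact abs_sum_mul_lt_sum_abs_mul hL hε
      _ = 1 := by rw [hLδ]; ring
  exact Int.abs_lt_one_iff.1 (by exact_mod_cast hlt)

end

theorem nearest_int_parts_satisfy_recurrence_general (α : ℝ)
    (d : ℕ) (a : ℕ → ℤ)
    (hroot : ∑ i ∈ Finset.range (d + 1), (a i : ℝ) * α ^ i = 0)
    (ξ η : ℝ)
    (δ : ℝ)
    (hδ : δ = (1 - |η| * ((|∑ i ∈ Finset.range (d + 1), a i| : ℤ) : ℝ)) /
        (∑ i ∈ Finset.range (d + 1), ((|a i| : ℤ) : ℝ)))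
    (A : ℕ → ℤ) (ε : ℕ → ℝ)
    (hdecomp : ∀ m : ℕ, ξ * α ^ m = (A m : ℝ) + η + ε m)
    (n : ℕ) (hsmall : ∀ i ≤ d, |ε (n + i)| < δ) :
    ∑ i ∈ Finset.range (d + 1), a i * A (n + i) = 0 :=
  sum_mul_eq_zero_of_eq_int_add_add (sum_mul_mul_pow_add_eq_zero hroot ξ n)
    (fun i _ => hdecomp (n + i)) hδ fun i hi => hsmall i (mem_range_succ_iff.1 hi)

/-- If `α > 1` is a root of the irreducible integer polynomial
`f = a_d x^d + ⋯ + a_0` (its minimal polynomial), `L̃|η| < 1`, `δ = (1 − |η| L̃)/L`, and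
`ξ α^{n+i} = A_{n+i} + η + ε_{n+i}` with `|ε_{n+i}| < δ` for `i = 0,…,d`, then
`Σ a_i A_{n+i} = 0`. -/
theorem nearest_int_parts_satisfy_recurrence (α : ℝ) (hα : 1 < α)
    (d : ℕ) (hd : 1 ≤ d) (a : ℕ → ℤ) (had : a d ≠ 0)
    (hmin : Irreducible (∑ i ∈ Finset.range (d + 1), Polynomial.C (a i) * Polynomial.X ^ i))
    (hroot : ∑ i ∈ Finset.range (d + 1), (a i : ℝ) * α ^ i = 0)
    (ξ η : ℝ)
    (hη : ((|∑ i ∈ Finset.range (d + 1), a i| : ℤ) : ℝ) * |η| < 1)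
    (δ : ℝ)
    (hδ : δ = (1 - |η| * ((|∑ i ∈ Finset.range (d + 1), a i| : ℤ) : ℝ)) /
        (∑ i ∈ Finset.range (d + 1), ((|a i| : ℤ) : ℝ)))
    (A : ℕ → ℤ) (ε : ℕ → ℝ)
    (hdecomp : ∀ m : ℕ, ξ * α ^ m = (A m : ℝ) + η + ε m)
    (hhalf : ∀ m : ℕ, |ε m| ≤ 1 / 2)
    (n : ℕ) (hsmall : ∀ i ≤ d, |ε (n + i)| < δ) :
    ∑ i ∈ Finset.range (d + 1), a i * A (n + i) = 0 :=
  nearest_int_parts_satisfy_recurrence_general α d a hroot ξ η δ hδ A ε hdecomp n hsmall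
end

section
/- Let μ be a Borel probability measure on ℝ, α > 1 and ξ ∈ [1, α] real, and suppose there are constants C > 0 and C₀ ∈ ℕ such that |μ̂(u)| ≤ exp(−C⁻¹ Σ_{j=1}^{k−1} ‖ξ α^j‖²) whenever u > 0 is large, where k ≍ log u. If moreover there exist δ ∈ (0, 1/2) and c > 0 (depending only on α) with #{1 ≤ j ≤ M : ‖ξα^j‖ ≥ δ} ≥ c·log M for all M ≥ 2 and all ξ ∈ [1, α], then |μ̂(u)| ≤ (log u)^{−γ} for all sufficiently large u, where γ = C⁻¹·c'·δ² for some constant c' > 0 depending only on α. -/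
/-!
Since `k ≍ log u`, the count hypothesis with `M = k - 1` gives at least `c · log (k - 1)`, hence
about `(c / 2) · log log u`, indices `j < k` with `‖ξ α^j‖ ≥ δ`. Each contributes at least `δ²` to
the exponent, so `|μ̂(u)| ≤ exp (-C⁻¹ (c / 2) δ² log log u) = (log u)^(-C⁻¹ (c / 2) δ²)`.
-/

open MeasureTheory

/-- The Fourier transform `μ̂(u) = ∫ exp(2πiut) dμ(t)` of a measure on `ℝ`. -/
noncomputable def muFourier (μ : Measure ℝ) (u : ℝ) : ℂ :=
  ∫ t : ℝ, Complex.exp (2 * Real.pi * Complex.I * u * t) ∂μ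

open Filter Real

lemma ncard_mul_sq_le_sum_sq (f : ℕ → ℝ) {δ : ℝ} (hδ : 0 ≤ δ) (N : ℕ) :
    ({j : ℕ | 1 ≤ j ∧ j ≤ N ∧ δ ≤ f j}.ncard : ℝ) * δ ^ 2 ≤
      ∑ j ∈ Finset.Icc 1 N, f j ^ 2 := by
  have hset : {j : ℕ | 1 ≤ j ∧ j ≤ N ∧ δ ≤ f j} =
      ↑((Finset.Icc 1 N).filter (fun j => δ ≤ f j)) := by
    ext j
    simp [and_assoc]
  rw [hset, Set.ncard_coe_finset, ← nsmul_eq_mul]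
  calc _ ≤ ∑ j ∈ (Finset.Icc 1 N).filter (fun j => δ ≤ f j), f j ^ 2 :=
        Finset.card_nsmul_le_sum _ _ _ fun j hj =>
          pow_le_pow_left₀ hδ (Finset.mem_filter.mp hj).2 2
    _ ≤ _ := Finset.sum_le_sum_of_subset_of_nonneg (Finset.filter_subset _ _)
        fun j _ _ => sq_nonneg _

lemma eventually_log_div_two_le_log_sub_one {a : ℝ} (ha : 0 < a) :
    ∀ᶠ t in atTop, ∀ x : ℝ, a * t ≤ x → 2 ≤ x - 1 ∧ log t / 2 ≤ log (x - 1) := by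
  filter_upwards [(tendsto_id.const_mul_atTop ha).eventually_ge_atTop 4,
    tendsto_log_atTop.eventually_ge_atTop (-2 * log (a / 2)), eventually_gt_atTop 0]
    with t h4 hlog ht x hx
  simp only [id] at h4
  refine ⟨by linarith, ?_⟩
  calc log t / 2 ≤ log (a / 2) + log t := by linarith
    _ = log (a / 2 * t) := (log_mul (by positivity) ht.ne').symm
    _ ≤ log (x - 1) := log_le_log (by positivity) (by linarith)

lemma exp_neg_mul_le_rpow_neg {a b S L : ℝ} (ha : 0 ≤ a) (hL : 0 < L) (hS : b * log L ≤ S) :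
    exp (-a * S) ≤ L ^ (-(a * b)) := by
  rw [rpow_def_of_pos hL, exp_le_exp]
  nlinarith

theorem fourier_log_decay_from_count_general (μ : Measure ℝ)
    (α ξ : ℝ) (hξ1 : 1 ≤ ξ) (hξα : ξ ≤ α) (C : ℝ) (hC : 0 < C)
    (hbound : ∃ u₀ c₁ c₂ : ℝ, 0 < c₁ ∧ c₁ ≤ c₂ ∧ ∀ u : ℝ, u₀ ≤ u →
      ∃ k : ℕ, c₁ * Real.log u ≤ (k : ℝ) ∧ (k : ℝ) ≤ c₂ * Real.log u ∧
        ‖muFourier μ u‖ ≤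
          Real.exp (-C⁻¹ * ∑ j ∈ Finset.Icc 1 (k - 1), nearestIntDist (ξ * α ^ j) ^ 2))
    (δ c : ℝ) (hδ : δ ∈ Set.Ioo (0 : ℝ) (1 / 2)) (hc : 0 < c)
    (hcount : ∀ M : ℕ, 2 ≤ M → ∀ ξ' : ℝ, 1 ≤ ξ' → ξ' ≤ α →
      c * Real.log M ≤
        ({j : ℕ | 1 ≤ j ∧ j ≤ M ∧ δ ≤ nearestIntDist (ξ' * α ^ j)}.ncard : ℝ)) :
    ∃ c' > 0, ∃ u₁ : ℝ, ∀ u : ℝ, u₁ ≤ u →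
      ‖muFourier μ u‖ ≤ Real.log u ^ (-(C⁻¹ * c' * δ ^ 2)) := by
  obtain ⟨u₀, c₁, _, hc₁, -, hbnd⟩ := hbound
  refine ⟨c / 2, half_pos hc, eventually_atTop.mp ?_⟩
  filter_upwards [eventually_ge_atTop u₀, tendsto_log_atTop.eventually_gt_atTop 0,
    tendsto_log_atTop.eventually (eventually_log_div_two_le_log_sub_one hc₁)]
    with u hu₀ hlog hlarge
  obtain ⟨k, hk, -, hμ⟩ := hbnd u hu₀
  obtain ⟨hk2, hloglog⟩ := hlarge k hk
  have hk1 : 0 < k := by exact_mod_cast (show (0 : ℝ) < k by linarith)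
  have hM : 2 ≤ k - 1 := by
    have : (2 : ℝ) ≤ ((k - 1 : ℕ) : ℝ) := by rwa [Nat.cast_pred hk1]
    exact_mod_cast this
  have hcnt := hcount (k - 1) hM ξ hξ1 hξα
  rw [Nat.cast_pred hk1] at hcnt
  rw [mul_assoc]
  refine hμ.trans (exp_neg_mul_le_rpow_neg (inv_nonneg.mpr hC.le) hlog ?_)
  calc c / 2 * δ ^ 2 * log (log u) = c * (log (log u) / 2) * δ ^ 2 := by ring
    _ ≤ c * log ((k : ℝ) - 1) * δ ^ 2 := by gcongr
    _ ≤ _ := by gcongr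
    _ ≤ _ := ncard_mul_sq_le_sum_sq _ hδ.1.le (k - 1)

/-- if `|μ̂(u)| ≤ exp(−C⁻¹ Σ_{j=1}^{k−1} ‖ξ α^j‖²)` for large `u` with
`k ≍ log u`, and `#{1 ≤ j ≤ M : ‖ξ' α^j‖ ≥ δ} ≥ c log M` uniformly over `ξ' ∈ [1,α]`,
then `|μ̂(u)| ≤ (log u)^{−γ}` for large `u`, with `γ = C⁻¹ c' δ²`. -/
theorem fourier_log_decay_from_count (μ : Measure ℝ) [IsProbabilityMeasure μ]
    (α ξ : ℝ) (hα : 1 < α) (hξ1 : 1 ≤ ξ) (hξα : ξ ≤ α) (C : ℝ) (hC : 0 < C)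
    (hbound : ∃ u₀ c₁ c₂ : ℝ, 0 < c₁ ∧ c₁ ≤ c₂ ∧ ∀ u : ℝ, u₀ ≤ u →
      ∃ k : ℕ, c₁ * Real.log u ≤ (k : ℝ) ∧ (k : ℝ) ≤ c₂ * Real.log u ∧
        ‖muFourier μ u‖ ≤
          Real.exp (-C⁻¹ * ∑ j ∈ Finset.Icc 1 (k - 1), nearestIntDist (ξ * α ^ j) ^ 2))
    (δ c : ℝ) (hδ : δ ∈ Set.Ioo (0 : ℝ) (1 / 2)) (hc : 0 < c)
    (hcount : ∀ M : ℕ, 2 ≤ M → ∀ ξ' : ℝ, 1 ≤ ξ' → ξ' ≤ α →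
      c * Real.log M ≤
        ({j : ℕ | 1 ≤ j ∧ j ≤ M ∧ δ ≤ nearestIntDist (ξ' * α ^ j)}.ncard : ℝ)) :
    ∃ c' > 0, ∃ u₁ : ℝ, ∀ u : ℝ, u₁ ≤ u →
      ‖muFourier μ u‖ ≤ Real.log u ^ (-(C⁻¹ * c' * δ ^ 2)) :=
  fourier_log_decay_from_count_general μ α ξ hξ1 hξα C hC hbound δ c hδ hc hcount
end
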